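/- arXiv:2109.00910 — 3 statements merged into one kernel-verified Lean document; each statement's English description precedes it below -/
import Mathlib

section
/- For any real a, (1/√(2π)) ∫_{-∞}^{∞} Q(x) e^{-(x-a)²/2} dx ≤ Q(a) + (e^{-a²/4}/(2√2))·(1 − Q(a/√2)), where Q is the standard Gaussian tail function. -/
/-!
Let `X ~ N(a, 1)` and `Z ~ N(0, 1)` be independent. The left-hand side is `𝔼[Q(X)] = P(Z > X)`,
and `Z - X ~ N(-a, 2)`, so it equals `Q(a/√2)`. Writing `c = a/√2` and `φ` for the standard normal
density, it remains to show `Q(c) - Q(√2 c) ≤ e^{-c²/2}/(2√2) · (1 - Q(c))`. For `c ≤ 0` the left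
side is nonpositive. For `0 < c ≤ √2`, since `φ` decreases on `[0, ∞)`, the left side is at most
`(√2 - 1) c φ(c)` while `1 - Q(c) ≥ 1/2 + c φ(c)`. For `c ≥ √2`, Mills' inequality
`Q(c) ≤ φ(c)/c` bounds the left side from above and `1 - Q(c)` from below. The remaining numerical
inequalities only need `e⁻¹ ≈ 0.368`, `√2 < 1.415` and `√(2π) > 2.4`.
-/

open Real

noncomputable def gaussQ (a : ℝ) : ℝ := ∫ t in Set.Ioi a, (1 / Real.sqrt (2 * π)) * Real.exp (-t ^ 2 / 2)

open MeasureTheory ProbabilityTheory Set Filter Topology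

lemma gaussianPDFReal_one (m t : ℝ) :
    gaussianPDFReal m 1 t = 1 / √(2 * π) * exp (-(t - m) ^ 2 / 2) := by
  simp [gaussianPDFReal]

lemma gaussianPDFReal_zero_one (t : ℝ) :
    gaussianPDFReal 0 1 t = exp (-t ^ 2 / 2) / √(2 * π) := by
  rw [gaussianPDFReal_one, sub_zero, one_div_mul_eq_div]

lemma gaussianPDFReal_antitoneOn (m : ℝ) (v : NNReal) :
    AntitoneOn (gaussianPDFReal m v) (Ici m) := by
  intro s hs t _ hst
  simp only [gaussianPDFReal]
  gcongr
  exact sub_nonneg.mpr hs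

lemma hasDerivAt_gaussianPDFReal_zero_one (t : ℝ) :
    HasDerivAt (gaussianPDFReal 0 1) (-(t * gaussianPDFReal 0 1 t)) t := by
  have hexp : HasDerivAt (fun x ↦ -x ^ 2 / 2) (-t) t :=
    ((hasDerivAt_pow 2 t).fun_neg.div_const 2).congr_deriv (by ring)
  simp only [funext (gaussianPDFReal_one 0), sub_zero]
  exact (hexp.exp.const_mul (1 / √(2 * π))).congr_deriv (by ring)

lemma tendsto_gaussianPDFReal_zero_one_atTop : Tendsto (gaussianPDFReal 0 1) atTop (𝓝 0) := by
  have h : Tendsto (fun t : ℝ ↦ -t ^ 2 / 2) atTop atBot :=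
    (tendsto_neg_atTop_atBot.comp (tendsto_pow_atTop two_ne_zero)).atBot_div_const two_pos
  simpa [funext (gaussianPDFReal_one 0)] using (tendsto_exp_atBot.comp h).const_mul (1 / √(2 * π))

lemma measureReal_gaussianReal {m : ℝ} {v : NNReal} (hv : v ≠ 0) (s : Set ℝ) :
    (gaussianReal m v).real s = ∫ t in s, gaussianPDFReal m v t := by
  rw [measureReal_def, gaussianReal_apply_eq_integral m hv,
    ENNReal.toReal_ofReal (setIntegral_nonneg_of_ae (ae_of_all _ (gaussianPDFReal_nonneg m v)))]

lemma gaussianReal_apply_Ioi (m : ℝ) {v : NNReal} (hv : v ≠ 0) (x : ℝ) :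
    gaussianReal m v (Ioi x) = gaussianReal 0 1 (Ioi ((x - m) / √v)) := by
  have hmap : (gaussianReal 0 1).map (fun y ↦ √v * y + m) = gaussianReal m v := by
    rw [show (fun y ↦ √v * y + m) = (· + m) ∘ (√v * ·) from rfl,
      ← Measure.map_map (by fun_prop) (by fun_prop), gaussianReal_map_const_mul,
      gaussianReal_map_add_const]
    congr 1
    · simp
    · ext; simp
  have hv' : 0 < √(v : ℝ) := by positivity
  rw [← hmap, Measure.map_apply (by fun_prop) measurableSet_Ioi]
  congr 1
  ext y
  rw [mem_preimage, mem_Ioi, mem_Ioi, div_lt_iff₀ hv', sub_lt_iff_lt_add, mul_comm]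

lemma conv_apply_Ioi_zero (μ ν : Measure ℝ) [SFinite ν] :
    (μ ∗ ν) (Ioi 0) = ∫⁻ x, ν (Ioi (-x)) ∂μ := by
  rw [← lintegral_indicator_one measurableSet_Ioi,
    Measure.lintegral_conv (measurable_one.indicator measurableSet_Ioi)]
  congr with x
  rw [← lintegral_indicator_one measurableSet_Ioi]
  congr with y
  simp [indicator, neg_lt_iff_pos_add']

lemma AntitoneOn.integral_Ioc_le {f : ℝ → ℝ} {c b : ℝ} (hcb : c ≤ b)
    (hf : AntitoneOn f (Icc c b)) : ∫ t in Ioc c b, f t ≤ (b - c) * f c := by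
  rw [← intervalIntegral.integral_of_le hcb]
  calc ∫ t in c..b, f t ≤ ∫ _ in c..b, f c :=
        intervalIntegral.integral_mono_on hcb (uIcc_of_le hcb ▸ hf).intervalIntegrable
          intervalIntegrable_const fun t ht ↦ hf ⟨le_rfl, hcb⟩ ht ht.1
    _ = (b - c) * f c := by simp

lemma AntitoneOn.mul_le_integral_Ioc {f : ℝ → ℝ} {c b : ℝ} (hcb : c ≤ b)
    (hf : AntitoneOn f (Icc c b)) : (b - c) * f b ≤ ∫ t in Ioc c b, f t := by
  rw [← intervalIntegral.integral_of_le hcb]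
  calc (b - c) * f b = ∫ _ in c..b, f b := by simp
    _ ≤ ∫ t in c..b, f t :=
        intervalIntegral.integral_mono_on hcb intervalIntegrable_const
          (uIcc_of_le hcb ▸ hf).intervalIntegrable fun t ht ↦ hf ht ⟨hcb, le_rfl⟩ ht.2

lemma gaussQ_eq_integral_gaussianPDFReal (x : ℝ) :
    gaussQ x = ∫ t in Ioi x, gaussianPDFReal 0 1 t := by
  simp only [gaussQ, gaussianPDFReal_one, sub_zero]

lemma gaussQ_eq_measureReal (x : ℝ) : gaussQ x = (gaussianReal 0 1).real (Ioi x) := by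
  rw [measureReal_gaussianReal one_ne_zero, gaussQ_eq_integral_gaussianPDFReal]

lemma gaussQ_nonneg (x : ℝ) : 0 ≤ gaussQ x :=
  gaussQ_eq_measureReal x ▸ measureReal_nonneg

lemma gaussQ_le_one (x : ℝ) : gaussQ x ≤ 1 :=
  gaussQ_eq_measureReal x ▸ measureReal_le_one

lemma gaussQ_antitone : Antitone gaussQ := fun x y hxy ↦ by
  simp only [gaussQ_eq_measureReal]
  exact measureReal_mono (Ioi_subset_Ioi hxy)

lemma gaussQ_zero : gaussQ 0 = 1 / 2 := by
  have hexp : ∀ t : ℝ, -t ^ 2 / 2 = -(1 / 2) * t ^ 2 := fun t ↦ by ring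
  rw [gaussQ, integral_const_mul]
  simp only [hexp]
  rw [integral_gaussian_Ioi, show π / (1 / 2) = 2 * π by ring]
  have : 0 < √(2 * π) := by positivity
  field_simp

lemma gaussQ_sub_gaussQ {c b : ℝ} (h : c ≤ b) :
    gaussQ c - gaussQ b = ∫ t in Ioc c b, gaussianPDFReal 0 1 t := by
  rw [gaussQ_eq_measureReal, gaussQ_eq_measureReal,
    ← measureReal_sdiff (Ioi_subset_Ioi h) measurableSet_Ioi, Ioi_sdiff_Ioi,
    measureReal_gaussianReal one_ne_zero]

lemma gaussQ_le_gaussianPDFReal_div {c : ℝ} (hc : 0 < c) :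
    gaussQ c ≤ gaussianPDFReal 0 1 c / c := by
  have hderiv : ∀ x ∈ Ici c,
      HasDerivAt (fun t ↦ -gaussianPDFReal 0 1 t) (x * gaussianPDFReal 0 1 x) x := fun x _ ↦ by
    simpa using (hasDerivAt_gaussianPDFReal_zero_one x).fun_neg
  have hpos : ∀ x ∈ Ioi c, 0 ≤ x * gaussianPDFReal 0 1 x := fun x hx ↦
    mul_nonneg (hc.le.trans hx.le) (gaussianPDFReal_nonneg 0 1 x)
  have hlim : Tendsto (fun t ↦ -gaussianPDFReal 0 1 t) atTop (𝓝 0) := by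
    simpa using tendsto_gaussianPDFReal_zero_one_atTop.neg
  rw [gaussQ_eq_integral_gaussianPDFReal, le_div_iff₀ hc, ← integral_mul_const]
  calc ∫ t in Ioi c, gaussianPDFReal 0 1 t * c ≤ ∫ t in Ioi c, t * gaussianPDFReal 0 1 t :=
        setIntegral_mono_on ((integrable_gaussianPDFReal 0 1).integrableOn.mul_const c)
          (integrableOn_Ioi_deriv_of_nonneg' hderiv hpos hlim) measurableSet_Ioi fun t ht ↦ by
            rw [mul_comm]
            exact mul_le_mul_of_nonneg_right (le_of_lt ht) (gaussianPDFReal_nonneg 0 1 t)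
    _ = gaussianPDFReal 0 1 c := by
        rw [integral_Ioi_of_hasDerivAt_of_nonneg' hderiv hpos hlim]
        ring

lemma integral_gaussQ_mul_exp (a : ℝ) :
    1 / √(2 * π) * ∫ x, gaussQ x * exp (-(x - a) ^ 2 / 2) = ∫ x, gaussQ x ∂gaussianReal a 1 := by
  rw [integral_gaussianReal_eq_integral_smul one_ne_zero, ← integral_const_mul]
  simp only [gaussianPDFReal_one, smul_eq_mul]
  congr with x
  ring

lemma integral_gaussQ_gaussianReal (a : ℝ) :
    ∫ x, gaussQ x ∂gaussianReal a 1 = gaussQ (a / √2) := by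
  have hmeas : Measurable fun x : ℝ ↦ gaussianReal 0 1 (Ioi x) :=
    Antitone.measurable fun x y hxy ↦ measure_mono (Ioi_subset_Ioi hxy)
  have hlint : ∫⁻ x, gaussianReal 0 1 (Ioi x) ∂gaussianReal a 1 =
      gaussianReal 0 1 (Ioi (a / √2)) := by
    calc ∫⁻ x, gaussianReal 0 1 (Ioi x) ∂gaussianReal a 1
        = ∫⁻ x, gaussianReal 0 1 (Ioi (-x)) ∂gaussianReal (-a) 1 := by
          rw [← gaussianReal_map_neg,
            lintegral_map (f := fun x ↦ gaussianReal 0 1 (Ioi (-x))) (hmeas.comp measurable_neg)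
              measurable_neg]
          simp only [neg_neg]
      _ = gaussianReal (-a) 2 (Ioi 0) := by
          rw [← conv_apply_Ioi_zero, gaussianReal_conv_gaussianReal, add_zero, one_add_one_eq_two]
      _ = gaussianReal 0 1 (Ioi (a / √2)) := by
          rw [gaussianReal_apply_Ioi _ two_ne_zero]
          simp
  simp_rw [gaussQ_eq_measureReal, measureReal_def]
  rw [integral_toReal hmeas.aemeasurable (ae_of_all _ fun _ ↦ measure_lt_top _ _), hlint]

lemma two_point_four_lt_sqrt_two_mul_pi : 2.4 < √(2 * π) :=
  (lt_sqrt (by norm_num)).2 (by nlinarith [pi_gt_three])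

lemma gaussQ_sub_gaussQ_sqrt_two_mul_le_of_sq_le_two {c : ℝ} (hc : 0 ≤ c) (hc2 : c ^ 2 ≤ 2) :
    gaussQ c - gaussQ (√2 * c) ≤ exp (-c ^ 2 / 2) / (2 * √2) * (1 - gaussQ c) := by
  have hs : √2 ^ 2 = 2 := sq_sqrt zero_le_two
  have hs1 : 1 < √2 := one_lt_sqrt_two
  have hs2 : √2 < 1.415 := by nlinarith
  have hcs : c ≤ √2 := by nlinarith
  have hK := two_point_four_lt_sqrt_two_mul_pi
  set E := exp (-c ^ 2 / 2)
  have hφ : gaussianPDFReal 0 1 c = E / √(2 * π) := gaussianPDFReal_zero_one c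
  have hE : 0.3678 < E := by
    have : exp (-1) ≤ E := exp_le_exp.2 (by linarith)
    linarith [exp_neg_one_gt_d9]
  have hupper : gaussQ c - gaussQ (√2 * c) ≤ (√2 * c - c) * gaussianPDFReal 0 1 c := by
    have hcb : c ≤ √2 * c := by nlinarith
    rw [gaussQ_sub_gaussQ hcb]
    exact AntitoneOn.integral_Ioc_le hcb
      ((gaussianPDFReal_antitoneOn 0 1).mono fun _ ht ↦ hc.trans ht.1)
  have hlower : 1 / 2 + c * gaussianPDFReal 0 1 c ≤ 1 - gaussQ c := by
    have := AntitoneOn.mul_le_integral_Ioc hc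
      ((gaussianPDFReal_antitoneOn 0 1).mono fun _ ht ↦ ht.1)
    rw [← gaussQ_sub_gaussQ hc, gaussQ_zero, sub_zero] at this
    linarith
  have key : (4 - 2 * √2) * c ≤ √(2 * π) / 2 + c * E := by nlinarith
  calc gaussQ c - gaussQ (√2 * c) ≤ (√2 * c - c) * gaussianPDFReal 0 1 c := hupper
    _ = E / (2 * √2) * ((4 - 2 * √2) * c / √(2 * π)) := by
        rw [hφ]
        field_simp
        linear_combination (2 * c) * hs
    _ ≤ E / (2 * √2) * (1 / 2 + c * gaussianPDFReal 0 1 c) := by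
        rw [hφ]
        gcongr
        rw [div_le_iff₀ (by positivity)]
        field_simp
        linarith
    _ ≤ E / (2 * √2) * (1 - gaussQ c) := by gcongr

lemma gaussQ_sub_gaussQ_sqrt_two_mul_le_of_two_le_sq {c : ℝ} (hc : 0 < c) (hc2 : 2 ≤ c ^ 2) :
    gaussQ c - gaussQ (√2 * c) ≤ exp (-c ^ 2 / 2) / (2 * √2) * (1 - gaussQ c) := by
  have hs : √2 ^ 2 = 2 := sq_sqrt zero_le_two
  have hs1 : 1 < √2 := one_lt_sqrt_two
  have hcs : √2 ≤ c := by nlinarith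
  have hK := two_point_four_lt_sqrt_two_mul_pi
  set E := exp (-c ^ 2 / 2)
  have hφ : gaussianPDFReal 0 1 c = E / √(2 * π) := gaussianPDFReal_zero_one c
  have hE : E < 0.3679 := by
    have : E ≤ exp (-1) := exp_le_exp.2 (by linarith)
    linarith [exp_neg_one_lt_d9]
  have hmills := gaussQ_le_gaussianPDFReal_div hc
  have key : 2 * √2 + E ≤ √(2 * π) * c := by nlinarith
  calc gaussQ c - gaussQ (√2 * c) ≤ gaussianPDFReal 0 1 c / c := by
        linarith [gaussQ_nonneg (√2 * c)]
    _ = E / (2 * √2) * (2 * √2 / (√(2 * π) * c)) := by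
        rw [hφ]
        field_simp
    _ ≤ E / (2 * √2) * (1 - gaussianPDFReal 0 1 c / c) := by
        rw [hφ]
        gcongr
        rw [div_le_iff₀ (by positivity)]
        field_simp
        linarith
    _ ≤ E / (2 * √2) * (1 - gaussQ c) := by gcongr

lemma gaussQ_le_gaussQ_sqrt_two_mul_add (c : ℝ) :
    gaussQ c ≤ gaussQ (√2 * c) + exp (-c ^ 2 / 2) / (2 * √2) * (1 - gaussQ c) := by
  rcases le_or_gt c 0 with hc | hc
  · have hmono : gaussQ c ≤ gaussQ (√2 * c) :=
      gaussQ_antitone (by nlinarith [one_lt_sqrt_two])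
    have : 0 ≤ exp (-c ^ 2 / 2) / (2 * √2) * (1 - gaussQ c) :=
      mul_nonneg (by positivity) (sub_nonneg.2 (gaussQ_le_one c))
    linarith
  · rcases le_total (c ^ 2) 2 with hc2 | hc2
    · linarith [gaussQ_sub_gaussQ_sqrt_two_mul_le_of_sq_le_two hc.le hc2]
    · linarith [gaussQ_sub_gaussQ_sqrt_two_mul_le_of_two_le_sq hc hc2]

theorem smoothed_Q_bound (a : ℝ) :
    (1 / Real.sqrt (2 * π)) * ∫ x : ℝ, gaussQ x * Real.exp (-(x - a) ^ 2 / 2) ≤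
      gaussQ a + (Real.exp (-a ^ 2 / 4) / (2 * Real.sqrt 2)) * (1 - gaussQ (a / Real.sqrt 2)) := by
  have h := gaussQ_le_gaussQ_sqrt_two_mul_add (a / √2)
  rw [mul_div_cancel₀ a (sqrt_ne_zero'.2 two_pos),
    show -(a / √2) ^ 2 / 2 = -a ^ 2 / 4 by rw [div_pow, sq_sqrt zero_le_two]; ring] at h
  rw [integral_gaussQ_mul_exp, integral_gaussQ_gaussianReal]
  exact h
end

section
/- For d ∈ {0,1,2,3} and β > 0, the sum S_d = Σ_{i=0}^{∞} (i/β)^d e^{-i²/(8β²)} satisfies S_0 ≤ √(2π)·β, S_1 ≤ 4β + 4e^{-1/2}, S_2 ≤ 4√(2π)·β + 16e^{-1}, and S_3 ≤ 32β + 48√3·e^{-3/2} (with the convention 0^0 = 0). -/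
/-!
Writing `g_d t = t ^ d * exp (-t ^ 2 / 8)` (`gaussWeight d` below), the `i`-th summand is
`g_d (i / β)`. The function `g_d` increases on `[0, 2√d]` and decreases afterwards, so each summand
is bounded by the integral of `g_d (· / β)` over an adjacent unit interval, except for the two
integers next to the peak, which are bounded by the peak value. Hence the sum is at most
`β ∫₀^∞ g_d + 2 g_d (2√d)`, and `∫₀^∞ g_d = √8 ^ (d + 1) Γ((d + 1) / 2) / 2` is a Gamma integral.
For `d = 0` the function is decreasing and the integral test alone gives the bound.
-/

open Real Set MeasureTheory

section Unimodal

variable {f : ℝ → ℝ} {m : ℝ}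

theorem apply_le_apply_of_monotoneOn_of_antitoneOn (hm : 0 ≤ m) (hmono : MonotoneOn f (Icc 0 m))
    (hanti : AntitoneOn f (Ici m)) {x : ℝ} (hx : 0 ≤ x) : f x ≤ f m := by
  rcases le_total x m with hxm | hmx
  · exact hmono ⟨hx, hxm⟩ ⟨hm, le_rfl⟩ hxm
  · exact hanti self_mem_Ici hmx hmx

theorem intervalIntegral_add_intervalIntegral_le_integral_Ioi {a b c d : ℝ}
    (hf : IntegrableOn f (Ioi 0)) (hf_nonneg : ∀ x ∈ Ioi 0, 0 ≤ f x)
    (ha : 0 ≤ a) (hab : a ≤ b) (hbc : b ≤ c) (hcd : c ≤ d) :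
    (∫ x in a..b, f x) + ∫ x in c..d, f x ≤ ∫ x in Ioi 0, f x := by
  have hsub : Ioc a b ∪ Ioc c d ⊆ Ioi 0 := union_subset (fun x hx ↦ ha.trans_lt hx.1)
    fun x hx ↦ (ha.trans (hab.trans hbc)).trans_lt hx.1
  rw [intervalIntegral.integral_of_le hab, intervalIntegral.integral_of_le hcd,
    ← setIntegral_union (Ioc_disjoint_Ioc_of_le hbc) measurableSet_Ioc
      (hf.mono_set (subset_union_left.trans hsub)) (hf.mono_set (subset_union_right.trans hsub))]
  exact setIntegral_mono_set hf (ae_restrict_of_forall_mem measurableSet_Ioi hf_nonneg)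
    hsub.eventuallyLE

theorem tsum_le_integral_Ioi_add_two_mul_of_unimodal (hm : 0 ≤ m) (hmono : MonotoneOn f (Icc 0 m))
    (hanti : AntitoneOn f (Ici m)) (hf : IntegrableOn f (Ioi 0))
    (hf_nonneg : ∀ x, 0 ≤ x → 0 ≤ f x) :
    ∑' n : ℕ, f n ≤ (∫ x in Ioi 0, f x) + 2 * f m := by
  set K := ⌊m⌋₊
  have hKm : (K : ℝ) ≤ m := Nat.floor_le hm
  have hmK : m < K + 1 := Nat.lt_floor_add_one m
  have hpeak : ∀ x, 0 ≤ x → f x ≤ f m :=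
    fun x hx ↦ apply_le_apply_of_monotoneOn_of_antitoneOn hm hmono hanti hx
  have hsplit (j : ℕ) : ∑ i ∈ Finset.range (K + 2 + j), f i =
      (∑ i ∈ Finset.range K, f (0 + i)) + (f K + f (K + 1)) +
        ∑ i ∈ Finset.range j, f ((K + 1 : ℝ) + ↑(i + 1)) := by
    simp only [Finset.sum_range_add, Finset.sum_range_succ]
    push_cast
    ring_nf
  have hblock (j : ℕ) :
      ∑ i ∈ Finset.range (K + 2 + j), f i ≤ (∫ x in Ioi 0, f x) + 2 * f m := by
    have hinc : ∑ i ∈ Finset.range K, f (0 + i) ≤ ∫ x in (0 : ℝ)..0 + K, f x :=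
      MonotoneOn.sum_le_integral (hmono.mono (Icc_subset_Icc le_rfl (by simpa using hKm)))
    have hdec : ∑ i ∈ Finset.range j, f ((K + 1 : ℝ) + ↑(i + 1)) ≤
        ∫ x in (K + 1 : ℝ)..(K + 1) + j, f x :=
      AntitoneOn.sum_le_integral (hanti.mono fun x hx ↦ hmK.le.trans hx.1)
    have hints := intervalIntegral_add_intervalIntegral_le_integral_Ioi (a := 0) (b := 0 + K)
      (c := K + 1) (d := (K + 1) + j) hf (fun x hx ↦ hf_nonneg x (le_of_lt hx)) le_rfl
      (by positivity) (by linarith) (by simp)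
    linarith [hpeak K K.cast_nonneg, hpeak (K + 1) (by positivity), hsplit j]
  refine Real.tsum_le_of_sum_range_le (fun n ↦ hf_nonneg n n.cast_nonneg) fun n ↦ ?_
  calc ∑ i ∈ Finset.range n, f i ≤ ∑ i ∈ Finset.range (K + 2 + n), f i :=
        Finset.sum_le_sum_of_subset_of_nonneg (Finset.range_subset_range.2 (by omega))
          fun i _ _ ↦ hf_nonneg i i.cast_nonneg
    _ ≤ _ := hblock n

end Unimodal

noncomputable def gaussWeight (d : ℕ) (t : ℝ) : ℝ := t ^ d * exp (-t ^ 2 / 8)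

namespace gaussWeight

variable (d : ℕ)

theorem nonneg {t : ℝ} (ht : 0 ≤ t) : 0 ≤ gaussWeight d t := by
  unfold gaussWeight; positivity

theorem hasDerivAt (t : ℝ) :
    HasDerivAt (gaussWeight d) ((d * t ^ (d - 1) - t ^ (d + 1) / 4) * exp (-t ^ 2 / 8)) t := by
  have hexp :
      HasDerivAt (fun t : ℝ ↦ exp (-t ^ 2 / 8)) (exp (-t ^ 2 / 8) * (-(2 * t) / 8)) t := by
    simpa using ((hasDerivAt_pow 2 t).neg.div_const 8).exp
  exact ((hasDerivAt_pow d t).mul hexp).congr_deriv (by ring)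

/-- Multiplying by `t` removes the truncated exponent `d - 1`. -/
theorem mul_deriv_coeff_eq (t : ℝ) :
    t * (d * t ^ (d - 1) - t ^ (d + 1) / 4) = (d - t ^ 2 / 4) * t ^ d := by
  cases d <;> simp [pow_succ] <;> ring

theorem differentiable : Differentiable ℝ (gaussWeight d) :=
  fun t ↦ (hasDerivAt d t).differentiableAt

theorem monotoneOn : MonotoneOn (gaussWeight d) (Icc 0 (2 * √d)) := by
  refine monotoneOn_of_deriv_nonneg (convex_Icc _ _) (differentiable d).continuous.continuousOn
    (differentiable d).differentiableOn fun t ht ↦ ?_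
  rw [interior_Icc] at ht
  have hsq : t ^ 2 ≤ 4 * d := by
    nlinarith [ht.1, ht.2, sq_sqrt (Nat.cast_nonneg (α := ℝ) d)]
  have hfactor : 0 ≤ d * t ^ (d - 1) - t ^ (d + 1) / 4 := by
    refine nonneg_of_mul_nonneg_right ?_ ht.1
    rw [mul_deriv_coeff_eq]
    have := pow_nonneg ht.1.le d
    nlinarith
  rw [(hasDerivAt d t).deriv]
  positivity

theorem antitoneOn : AntitoneOn (gaussWeight d) (Ici (2 * √d)) := by
  refine antitoneOn_of_deriv_nonpos (convex_Ici _) (differentiable d).continuous.continuousOn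
    (differentiable d).differentiableOn fun t ht ↦ ?_
  rw [interior_Ici] at ht
  have ht0 : 0 < t := lt_of_le_of_lt (by positivity) ht
  have hsq : 4 * d ≤ t ^ 2 := by
    nlinarith [sq_sqrt (Nat.cast_nonneg (α := ℝ) d),
      mul_self_lt_mul_self (by positivity : (0 : ℝ) ≤ 2 * √d) ht]
  have hfactor : d * t ^ (d - 1) - t ^ (d + 1) / 4 ≤ 0 := by
    refine nonpos_of_mul_nonpos_right ?_ ht0
    rw [mul_deriv_coeff_eq]
    have := pow_nonneg ht0.le d
    nlinarith
  rw [(hasDerivAt d t).deriv]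
  exact mul_nonpos_of_nonpos_of_nonneg hfactor (exp_pos _).le

theorem eqOn_rpow_mul_exp_neg_mul_rpow :
    EqOn (fun t : ℝ ↦ t ^ (d : ℝ) * exp (-(1 / 8) * t ^ (2 : ℝ))) (gaussWeight d) (Ioi 0) := by
  intro t _
  simp only [gaussWeight, rpow_natCast, rpow_two]
  ring_nf

theorem integrableOn : IntegrableOn (gaussWeight d) (Ioi 0) :=
  (integrableOn_rpow_mul_exp_neg_mul_sq (b := 1 / 8) (by norm_num)
    (by linarith [(d.cast_nonneg : (0 : ℝ) ≤ d)])).congr_fun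
      (by simpa only [rpow_two] using eqOn_rpow_mul_exp_neg_mul_rpow d) measurableSet_Ioi

theorem integral_Ioi :
    ∫ t in Ioi 0, gaussWeight d t = √8 ^ (d + 1) / 2 * Gamma ((d + 1) / 2) := by
  rw [← setIntegral_congr_fun measurableSet_Ioi (eqOn_rpow_mul_exp_neg_mul_rpow d),
    integral_rpow_mul_exp_neg_mul_rpow two_pos (by linarith [(d.cast_nonneg : (0 : ℝ) ≤ d)])
      (by norm_num)]
  have h8 : (1 / 8 : ℝ) ^ (-((d : ℝ) + 1) / 2) = √8 ^ (d + 1) := by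
    rw [sqrt_eq_rpow, ← rpow_natCast, ← rpow_mul (by norm_num), one_div, inv_rpow (by norm_num),
      ← rpow_neg (by norm_num)]
    push_cast
    ring_nf
  rw [h8]
  ring

theorem apply_two_mul_sqrt : gaussWeight d (2 * √d) = (2 * √d) ^ d * exp (-d / 2) := by
  rw [gaussWeight, mul_pow 2 (√d) 2, sq_sqrt d.cast_nonneg]
  ring_nf

theorem apply_div (x β : ℝ) :
    gaussWeight d (x / β) = (x / β) ^ d * exp (-x ^ 2 / (8 * β ^ 2)) := by
  rw [gaussWeight]
  ring_nf

variable {β : ℝ} (hβ : 0 < β)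
include hβ

theorem monotoneOn_comp_div :
    MonotoneOn (fun x ↦ gaussWeight d (x / β)) (Icc 0 (2 * √d * β)) :=
  (monotoneOn d).comp ((monotone_div_right_of_nonneg hβ.le).monotoneOn _)
    fun _ hx ↦ ⟨div_nonneg hx.1 hβ.le, (div_le_iff₀ hβ).2 hx.2⟩

theorem antitoneOn_comp_div : AntitoneOn (fun x ↦ gaussWeight d (x / β)) (Ici (2 * √d * β)) :=
  (antitoneOn d).comp_MonotoneOn ((monotone_div_right_of_nonneg hβ.le).monotoneOn _)
    fun _ hx ↦ (le_div_iff₀ hβ).2 hx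

theorem integrableOn_comp_div : IntegrableOn (fun x ↦ gaussWeight d (x / β)) (Ioi 0) := by
  simp_rw [div_eq_inv_mul]
  exact (integrableOn_Ioi_comp_mul_left_iff _ 0 (inv_pos.2 hβ)).2 (by simpa using integrableOn d)

theorem integral_Ioi_comp_div :
    ∫ x in Ioi 0, gaussWeight d (x / β) = β * ∫ t in Ioi 0, gaussWeight d t := by
  simp_rw [div_eq_inv_mul]
  rw [integral_comp_mul_left_Ioi _ 0 (inv_pos.2 hβ), mul_zero, inv_inv, smul_eq_mul]

theorem tsum_comp_div_le :
    ∑' n : ℕ, gaussWeight d (n / β) ≤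
      β * (∫ t in Ioi 0, gaussWeight d t) + 2 * gaussWeight d (2 * √d) := by
  have := tsum_le_integral_Ioi_add_two_mul_of_unimodal (by positivity) (monotoneOn_comp_div d hβ)
    (antitoneOn_comp_div d hβ) (integrableOn_comp_div d hβ)
    fun x hx ↦ nonneg d (div_nonneg hx hβ.le)
  rwa [integral_Ioi_comp_div d hβ, mul_div_cancel_right₀ _ hβ.ne'] at this

omit d in
theorem tsum_ite_zero_comp_div_le :
    ∑' n : ℕ, (if n = 0 then 0 else gaussWeight 0 (n / β)) ≤
      β * ∫ t in Ioi 0, gaussWeight 0 t := by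
  have hanti : AntitoneOn (fun x ↦ gaussWeight 0 (x / β)) (Ici 0) := by
    simpa using antitoneOn_comp_div 0 hβ
  have hnonneg : ∀ x ∈ Ioi (0 : ℝ), 0 ≤ gaussWeight 0 (x / β) :=
    fun x hx ↦ nonneg 0 (div_nonneg (le_of_lt hx) hβ.le)
  have hsummable := hanti.summable_of_integrableOn_Ioi_zero (integrableOn_comp_div 0 hβ) hnonneg
  rw [tsum_eq_zero_add' (by simpa using (summable_nat_add_iff 1).2 hsummable),
    ← integral_Ioi_comp_div 0 hβ]
  simpa using hanti.tsum_add_one_le_integral (integrableOn_comp_div 0 hβ) hnonneg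

end gaussWeight

theorem gaussian_like_sum_bounds (β : ℝ) (hβ : 0 < β) :
    (∑' i : ℕ, (if i = 0 then (0 : ℝ) else Real.exp (-(i : ℝ) ^ 2 / (8 * β ^ 2))) ≤
        Real.sqrt (2 * π) * β) ∧
    (∑' i : ℕ, ((i : ℝ) / β) ^ 1 * Real.exp (-(i : ℝ) ^ 2 / (8 * β ^ 2)) ≤
        4 * β + 4 * Real.exp (-1 / 2)) ∧
    (∑' i : ℕ, ((i : ℝ) / β) ^ 2 * Real.exp (-(i : ℝ) ^ 2 / (8 * β ^ 2)) ≤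
        4 * Real.sqrt (2 * π) * β + 16 * Real.exp (-1)) ∧
    (∑' i : ℕ, ((i : ℝ) / β) ^ 3 * Real.exp (-(i : ℝ) ^ 2 / (8 * β ^ 2)) ≤
        32 * β + 48 * Real.sqrt 3 * Real.exp (-3 / 2)) := by
  have hsum (d : ℕ) : ∑' i : ℕ, ((i : ℝ) / β) ^ d * exp (-(i : ℝ) ^ 2 / (8 * β ^ 2)) ≤
      β * (√8 ^ (d + 1) / 2 * Gamma ((d + 1) / 2)) + 2 * ((2 * √d) ^ d * exp (-d / 2)) := by
    simpa only [gaussWeight.apply_div, gaussWeight.integral_Ioi, gaussWeight.apply_two_mul_sqrt]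
      using gaussWeight.tsum_comp_div_le d hβ
  have hsqrt8 : √8 = 2 * √2 := by
    rw [show (8 : ℝ) = 2 ^ 2 * 2 by norm_num, sqrt_mul (by norm_num), sqrt_sq (by norm_num)]
  refine ⟨?_, ?_, ?_, ?_⟩
  · have h0 := gaussWeight.tsum_ite_zero_comp_div_le hβ
    simp only [gaussWeight.apply_div, pow_zero, one_mul, gaussWeight.integral_Ioi] at h0
    convert h0 using 1
    norm_num [Real.Gamma_one_half_eq, hsqrt8, sqrt_mul]
    ring
  · refine (hsum 1).trans_eq ?_
    norm_num
    ring
  · have hgamma : Gamma (3 / 2) = √π / 2 := by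
      rw [show (3 / 2 : ℝ) = 1 / 2 + 1 by norm_num, Gamma_add_one (by norm_num),
        Gamma_one_half_eq]
      ring
    refine (hsum 2).trans_eq ?_
    norm_num [hsqrt8, hgamma, sqrt_mul]
    linear_combination
      (2 * β * √π * √2 + 8 * exp (-1)) * sq_sqrt (zero_le_two : (0 : ℝ) ≤ 2)
  · refine (hsum 3).trans_eq ?_
    norm_num
    linear_combination β / 2 * (√8 ^ 2 + 8) * sq_sqrt (by norm_num : (0 : ℝ) ≤ 8) +
      16 * √3 * exp (-(3 / 2)) * sq_sqrt (by norm_num : (0 : ℝ) ≤ 3)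
end

section
/- For E > 0 and β > 0, the sum Σ_{i=2}^{∞} (i/β)² · (1/2) · e^{-(1/2)(2E β/i + i/(2β))²} is bounded above by (1/2) e^{-E} Σ_{i=0}^{∞} (i/β)² e^{-(1/2)(i/(2β))²} ≤ √(8π)·β·e^{-E}·(1 + 4e^{-1}/(β√(2π))). -/
/-! Since `(a + b)² ≥ 2ab + b²` and `ab = E` for `a = 2Eβ/i`, `b = i/(2β)`, every summand on the
left is at most `e^{-E}/2` times the summand `(i/β)² e^{-(i/2β)²/2}` on the right. This weight is
`8 u e^{-u}` with `u = x²/(8β²)`: it increases up to `x = √8 β`, decreases afterwards and never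
exceeds `8/e`. For such a unimodal function the sum over `ℕ` exceeds the integral over `(0, ∞)` by
at most twice the maximum, and the integral is `∫₀^∞ x² e^{-x²/(2σ²)} dx = √(2π) σ³ / 2` at
`σ = 2β`, a value of `Γ(3/2)`. -/

open Real Set MeasureTheory

theorem monotoneOn_mul_exp_neg : MonotoneOn (fun u : ℝ ↦ u * exp (-u)) (Iic 1) := by
  intro s _ t (ht : t ≤ 1) hst
  have key : s ≤ t * exp (s - t) := by
    rcases le_total 0 t with h0 | h0
    · nlinarith [add_one_le_exp (s - t), mul_nonneg (sub_nonneg.2 hst) (sub_nonneg.2 ht)]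
    · nlinarith [exp_le_one_iff.2 (sub_nonpos.2 hst)]
  calc s * exp (-s) ≤ t * exp (s - t) * exp (-s) := by gcongr
    _ = t * exp (-t) := by rw [mul_assoc, ← exp_add]; ring_nf

theorem antitoneOn_mul_exp_neg : AntitoneOn (fun u : ℝ ↦ u * exp (-u)) (Ici 1) := by
  intro s (hs : 1 ≤ s) t _ hst
  have key : t ≤ s * exp (t - s) := by
    nlinarith [add_one_le_exp (t - s), mul_nonneg (sub_nonneg.2 hst) (sub_nonneg.2 hs)]
  calc t * exp (-t) ≤ s * exp (t - s) * exp (-t) := by gcongr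
    _ = s * exp (-s) := by rw [mul_assoc, ← exp_add]; ring_nf

theorem exp_neg_half_sq_add_le (a b : ℝ) :
    exp (-(1 / 2) * (a + b) ^ 2) ≤ exp (-(a * b)) * exp (-(1 / 2) * b ^ 2) := by
  rw [← exp_add, exp_le_exp]
  nlinarith [sq_nonneg a]

theorem integral_sq_mul_exp_neg_half_sq_div {σ : ℝ} (hσ : 0 < σ) :
    ∫ x in Ioi 0, x ^ 2 * exp (-(1 / 2) * (x / σ) ^ 2) = √(2 * π) / 2 * σ ^ 3 := by
  have hb : 0 < (2 * σ ^ 2)⁻¹ := by positivity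
  have h := integral_rpow_mul_exp_neg_mul_rpow two_pos (by norm_num : (-1 : ℝ) < 2) hb
  have hΓ : Gamma ((2 + 1) / 2) = √π / 2 := by
    rw [show (2 + 1 : ℝ) / 2 = 1 / 2 + 1 by norm_num, Gamma_add_one (by norm_num),
      Gamma_one_half_eq]
    ring
  have hpow : (2 * σ ^ 2)⁻¹ ^ (-(2 + 1) / 2 : ℝ) = 2 * σ ^ 2 * (√2 * σ) := by
    rw [inv_rpow (by positivity), ← rpow_neg (by positivity),
      show -(-(2 + 1) / 2 : ℝ) = 1 + 1 / 2 by norm_num, rpow_add (by positivity), rpow_one,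
      ← sqrt_eq_rpow, sqrt_mul (by norm_num), sqrt_sq hσ.le]
  simp only [rpow_two, hΓ, hpow] at h
  rw [show (fun x : ℝ ↦ x ^ 2 * exp (-(1 / 2) * (x / σ) ^ 2))
      = fun x ↦ x ^ 2 * exp (-(2 * σ ^ 2)⁻¹ * x ^ 2) by ext x; field_simp, h,
    sqrt_mul zero_le_two]
  ring

section Unimodal

variable {f : ℝ → ℝ} {c M : ℝ}

theorem AntitoneOn.summable_of_integrableOn_Ioi' (anti : AntitoneOn f (Ici c))
    (integrable : IntegrableOn f (Ioi c)) (nonneg : ∀ x ∈ Ioi c, 0 ≤ f x) :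
    Summable fun n : ℕ ↦ f n := by
  have hc : c ≤ ⌈c⌉₊ := Nat.le_ceil c
  exact (anti.mono (Ici_subset_Ici.2 hc)).summable_of_integrableOn_Ioi
    (integrable.mono_set (Ioi_subset_Ioi hc)) fun x hx ↦ nonneg x (hc.trans_lt hx)

theorem tsum_le_integral_add_of_monotoneOn_of_antitoneOn (hc : 0 ≤ c)
    (mono : MonotoneOn f (Icc 0 c)) (anti : AntitoneOn f (Ici c))
    (integrable : IntegrableOn f (Ioi 0)) (nonneg : ∀ x ∈ Ioi 0, 0 ≤ f x)
    (bdd : ∀ x, f x ≤ M) :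
    ∑' n : ℕ, f n ≤ (∫ x in Ioi 0, f x) + 2 * M := by
  set m := ⌊c⌋₊
  -- `0, …, m - 1` lie left of the peak and `m + 2, …` right of it; `f m`, `f (m + 1)` cost `2 * M`.
  have hm_le : (m : ℝ) ≤ c := Nat.floor_le hc
  have hc_le : c ≤ m + 1 := (Nat.lt_floor_add_one c).le
  have integrable' : IntegrableOn f (Ioi ((m + 1 : ℕ) : ℝ)) :=
    integrable.mono_set (Ioi_subset_Ioi (by positivity))
  have nonneg' : ∀ x ∈ Ioi ((m + 1 : ℕ) : ℝ), 0 ≤ f x :=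
    fun x hx ↦ nonneg x (mem_Ioi.2 ((Nat.cast_nonneg _).trans_lt hx))
  have anti' : AntitoneOn f (Ici ((m + 1 : ℕ) : ℝ)) :=
    anti.mono (Ici_subset_Ici.2 (by push_cast; exact hc_le))
  have head : ∑ i ∈ Finset.range m, f i ≤ ∫ x in (0 : ℝ)..m, f x := by
    have mono' : MonotoneOn f (Icc 0 (0 + m)) := mono.mono (Icc_subset_Icc_right (by simpa))
    simpa using mono'.sum_le_integral
  have tail : ∑' n : ℕ, f (n + (m + 2) : ℕ) ≤ ∫ x in Ioi ((m + 1 : ℕ) : ℝ), f x := by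
    simpa [add_assoc] using anti'.tsum_comp_add_le_integral (m + 1) integrable' nonneg'
  have split : (∫ x in (0 : ℝ)..m, f x) + ∫ x in Ioi ((m + 1 : ℕ) : ℝ), f x
      ≤ ∫ x in Ioi 0, f x := by
    rw [← intervalIntegral.integral_interval_add_Ioi integrable integrable']
    gcongr
    refine intervalIntegral.integral_mono_interval le_rfl (by positivity) (by simp) ?_ ?_
    · exact (ae_restrict_iff' measurableSet_Ioc).2 (.of_forall fun x hx ↦ nonneg x hx.1)
    · exact (intervalIntegrable_iff_integrableOn_Ioc_of_le (by positivity)).2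
        (integrable.mono_set Ioc_subset_Ioi_self)
  have summable := anti.summable_of_integrableOn_Ioi'
    (integrable.mono_set (Ioi_subset_Ioi hc)) fun x hx ↦ nonneg x (hc.trans_lt hx)
  rw [← summable.sum_add_tsum_nat_add (m + 2), Finset.sum_range_succ, Finset.sum_range_succ]
  linarith [bdd m, bdd (m + 1 : ℕ)]

end Unimodal

noncomputable def sqGaussian (β x : ℝ) : ℝ := (x / β) ^ 2 * exp (-(1 / 2) * (x / (2 * β)) ^ 2)

section SqGaussian

variable {β : ℝ}

theorem sqGaussian_eq_eight_mul (β x : ℝ) :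
    sqGaussian β x = 8 * (x ^ 2 / (8 * β ^ 2) * exp (-(x ^ 2 / (8 * β ^ 2)))) := by
  rw [sqGaussian]
  ring_nf

theorem sqGaussian_nonneg (β x : ℝ) : 0 ≤ sqGaussian β x := by
  rw [sqGaussian]
  positivity

theorem sqGaussian_le (β x : ℝ) : sqGaussian β x ≤ 8 * exp (-1) := by
  rw [sqGaussian_eq_eight_mul]
  gcongr
  exact mul_exp_neg_le_exp_neg_one _

theorem monotoneOn_sqGaussian (hβ : 0 < β) : MonotoneOn (sqGaussian β) (Icc 0 (√8 * β)) := by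
  intro x ⟨hx, _⟩ y ⟨_, hy⟩ hxy
  have hβ8 : (√8 * β) ^ 2 = 8 * β ^ 2 := by rw [mul_pow, sq_sqrt (by norm_num)]
  rw [sqGaussian_eq_eight_mul, sqGaussian_eq_eight_mul]
  gcongr 8 * ?_
  refine monotoneOn_mul_exp_neg ?_ ?_ (by gcongr)
  all_goals
    rw [mem_Iic, div_le_one (by positivity)]
    nlinarith

theorem antitoneOn_sqGaussian (hβ : 0 < β) : AntitoneOn (sqGaussian β) (Ici (√8 * β)) := by
  intro x (hx : √8 * β ≤ x) y _ hxy
  have hβ8 : (√8 * β) ^ 2 = 8 * β ^ 2 := by rw [mul_pow, sq_sqrt (by norm_num)]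
  have h0 : 0 ≤ √8 * β := by positivity
  rw [sqGaussian_eq_eight_mul, sqGaussian_eq_eight_mul]
  gcongr 8 * ?_
  refine antitoneOn_mul_exp_neg ?_ ?_ (by gcongr; linarith)
  all_goals
    rw [mem_Ici, one_le_div (by positivity)]
    nlinarith

theorem sqGaussian_eq_inv_sq_mul (β x : ℝ) :
    sqGaussian β x = (β ^ 2)⁻¹ * (x ^ 2 * exp (-(1 / 2) * (x / (2 * β)) ^ 2)) := by
  rw [sqGaussian]
  ring

theorem integrable_sqGaussian (hβ : 0 < β) : Integrable (sqGaussian β) := by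
  have h := (integrable_rpow_mul_exp_neg_mul_sq (b := (8 * β ^ 2)⁻¹) (by positivity)
    (by norm_num : (-1 : ℝ) < 2)).const_mul (β ^ 2)⁻¹
  convert h using 2 with x
  rw [sqGaussian_eq_inv_sq_mul, rpow_two]
  ring_nf

theorem integral_sqGaussian (hβ : 0 < β) :
    ∫ x in Ioi 0, sqGaussian β x = 4 * √(2 * π) * β := by
  simp_rw [sqGaussian_eq_inv_sq_mul, integral_const_mul,
    integral_sq_mul_exp_neg_half_sq_div (by positivity : 0 < 2 * β)]
  field_simp
  ring

theorem summable_sqGaussian (hβ : 0 < β) : Summable fun n : ℕ ↦ sqGaussian β n :=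
  (antitoneOn_sqGaussian hβ).summable_of_integrableOn_Ioi'
    (integrable_sqGaussian hβ).integrableOn fun x _ ↦ sqGaussian_nonneg β x

theorem tsum_sqGaussian_le (hβ : 0 < β) :
    ∑' n : ℕ, sqGaussian β n ≤ 4 * √(2 * π) * β + 16 * exp (-1) := by
  have h := tsum_le_integral_add_of_monotoneOn_of_antitoneOn (by positivity)
    (monotoneOn_sqGaussian hβ) (antitoneOn_sqGaussian hβ) (integrable_sqGaussian hβ).integrableOn
    (fun x _ ↦ sqGaussian_nonneg β x) (sqGaussian_le β)
  rw [integral_sqGaussian hβ] at h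
  linarith

theorem mul_exp_neg_half_sq_add_le_sqGaussian (E : ℝ) {x : ℝ} (hβ : β ≠ 0) (hx : x ≠ 0) :
    (x / β) ^ 2 * (1 / 2) * exp (-(1 / 2) * (2 * E * β / x + x / (2 * β)) ^ 2)
      ≤ 1 / 2 * exp (-E) * sqGaussian β x := by
  have hE : 2 * E * β / x * (x / (2 * β)) = E := by field_simp
  calc (x / β) ^ 2 * (1 / 2) * exp (-(1 / 2) * (2 * E * β / x + x / (2 * β)) ^ 2)
      ≤ (x / β) ^ 2 * (1 / 2) * (exp (-E) * exp (-(1 / 2) * (x / (2 * β)) ^ 2)) := by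
        gcongr
        simpa only [hE] using exp_neg_half_sq_add_le (2 * E * β / x) (x / (2 * β))
    _ = 1 / 2 * exp (-E) * sqGaussian β x := by
        rw [sqGaussian]
        ring

end SqGaussian

theorem DL2_sum_bound_general (E β : ℝ) (hβ : 0 < β) :
    (∑' i : ℕ, (if 2 ≤ i then
          ((i : ℝ) / β) ^ 2 * (1 / 2) *
            Real.exp (-(1 / 2) * (2 * E * β / (i : ℝ) + (i : ℝ) / (2 * β)) ^ 2)
        else 0)) ≤
      (1 / 2) * Real.exp (-E) *
        ∑' i : ℕ, ((i : ℝ) / β) ^ 2 * Real.exp (-(1 / 2) * ((i : ℝ) / (2 * β)) ^ 2) ∧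
    (1 / 2) * Real.exp (-E) *
        (∑' i : ℕ, ((i : ℝ) / β) ^ 2 * Real.exp (-(1 / 2) * ((i : ℝ) / (2 * β)) ^ 2)) ≤
      Real.sqrt (8 * π) * β * Real.exp (-E) * (1 + 4 * Real.exp (-1) / (β * Real.sqrt (2 * π))) := by
  have summable := (summable_sqGaussian hβ).mul_left (1 / 2 * exp (-E))
  have termwise (i : ℕ) : (if 2 ≤ i then ((i : ℝ) / β) ^ 2 * (1 / 2) *
      exp (-(1 / 2) * (2 * E * β / i + i / (2 * β)) ^ 2) else 0)
        ≤ 1 / 2 * exp (-E) * sqGaussian β i := by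
    split_ifs with hi
    · exact mul_exp_neg_half_sq_add_le_sqGaussian E hβ.ne' (Nat.cast_ne_zero.2 (by omega))
    · exact mul_nonneg (by positivity) (sqGaussian_nonneg β i)
  constructor
  · calc _ ≤ ∑' i : ℕ, 1 / 2 * exp (-E) * sqGaussian β i :=
          Summable.tsum_le_tsum termwise
            (summable.of_nonneg_of_le (fun i ↦ by split_ifs <;> positivity) termwise) summable
      _ = 1 / 2 * exp (-E) * ∑' i : ℕ, sqGaussian β i := tsum_mul_left
  · calc 1 / 2 * exp (-E) * ∑' i : ℕ, sqGaussian β i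
        ≤ 1 / 2 * exp (-E) * (4 * √(2 * π) * β + 16 * exp (-1)) := by
          gcongr
          exact tsum_sqGaussian_le hβ
      _ = _ := by
          rw [show (8 : ℝ) * π = 2 ^ 2 * (2 * π) by ring,
            sqrt_mul (by norm_num : (0 : ℝ) ≤ 2 ^ 2), sqrt_sq zero_le_two]
          field_simp
          ring

theorem DL2_sum_bound (E β : ℝ) (hE : 0 < E) (hβ : 0 < β) :
    (∑' i : ℕ, (if 2 ≤ i then
          ((i : ℝ) / β) ^ 2 * (1 / 2) *
            Real.exp (-(1 / 2) * (2 * E * β / (i : ℝ) + (i : ℝ) / (2 * β)) ^ 2)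
        else 0)) ≤
      (1 / 2) * Real.exp (-E) *
        ∑' i : ℕ, ((i : ℝ) / β) ^ 2 * Real.exp (-(1 / 2) * ((i : ℝ) / (2 * β)) ^ 2) ∧
    (1 / 2) * Real.exp (-E) *
        (∑' i : ℕ, ((i : ℝ) / β) ^ 2 * Real.exp (-(1 / 2) * ((i : ℝ) / (2 * β)) ^ 2)) ≤
      Real.sqrt (8 * π) * β * Real.exp (-E) * (1 + 4 * Real.exp (-1) / (β * Real.sqrt (2 * π))) :=
  DL2_sum_bound_general E β hβ
end
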